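/- arXiv:math/0206182 — 6 statements merged into one kernel-verified Lean document; each statement's English description precedes it below -/
import Mathlib

section
/- Let K = {±y_i : i = 1,…,N} ⊂ ℝ^m be the incarnating set of an m-dimensional subspace Y of ℓ¹, meaning ‖x‖_Y = (1/2) ∑_{y ∈ K} |⟨x, y⟩| for all x ∈ ℝ^m. Then the closed convex hull of the set { ∑{ y_i ∈ K : ⟨y_i, u⟩ > 0 } : u ∈ ℝ^m } equals the unit ball of the dual space Y*. -/
open scoped RealInnerProductSpace

/-- If `K = {±y i : i = 1,…,N} ⊂ ℝ^m` is the incarnating set of an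
`m`-dimensional subspace `Y` of `ℓ¹`, i.e. `‖x‖_Y = (1/2) ∑_{y ∈ K} |⟨x,y⟩| = ∑ i |⟨x, y i⟩|`,
then the closed convex hull of `{ ∑ {y ∈ K : ⟨y,u⟩ > 0} : u ∈ ℝ^m }` is the unit ball of the
dual space `Y*` (identified with `{z : ⟨x,z⟩ ≤ ‖x‖_Y for all x}`). -/
theorem stmt_2 (m N : ℕ) (y : Fin N → EuclideanSpace ℝ (Fin m))
    (normY : EuclideanSpace ℝ (Fin m) → ℝ)
    (hnorm : ∀ x, normY x = (1/2) * ((∑ i, |⟪x, y i⟫|) + ∑ i, |⟪x, -y i⟫|)) :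
    closure (convexHull ℝ
      { z | ∃ u : EuclideanSpace ℝ (Fin m),
          z = (∑ i ∈ Finset.univ.filter (fun i => 0 < ⟪y i, u⟫), y i)
            + ∑ i ∈ Finset.univ.filter (fun i => 0 < ⟪-y i, u⟫), -y i })
    = { z | ∀ x, ⟪x, z⟫ ≤ normY x } := by
  set S : Set (EuclideanSpace ℝ (Fin m)) := { z | ∃ u : EuclideanSpace ℝ (Fin m),
          z = (∑ i ∈ Finset.univ.filter (fun i => 0 < ⟪y i, u⟫), y i)
            + ∑ i ∈ Finset.univ.filter (fun i => 0 < ⟪-y i, u⟫), -y i } with hS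
  have hnorm' : ∀ x, normY x = ∑ i, |⟪x, y i⟫| := by
    intro x
    rw [hnorm]
    have h : ∀ i, |⟪x, -y i⟫| = |⟪x, y i⟫| := fun i => by
      rw [inner_neg_right]; exact abs_neg _
    rw [Finset.sum_congr rfl fun i _ => h i]; ring
  have key : ∀ (u x : EuclideanSpace ℝ (Fin m)),
      ⟪x, (∑ i ∈ Finset.univ.filter (fun i => 0 < ⟪y i, u⟫), y i)
        + ∑ i ∈ Finset.univ.filter (fun i => 0 < ⟪-y i, u⟫), -y i⟫
      = ∑ i, ((if 0 < ⟪y i, u⟫ then ⟪x, y i⟫ else 0)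
            + (if 0 < -⟪y i, u⟫ then -⟪x, y i⟫ else 0)) := by
    intro u x
    rw [inner_add_right, inner_sum, inner_sum, Finset.sum_filter, Finset.sum_filter,
      ← Finset.sum_add_distrib]
    refine Finset.sum_congr rfl fun i _ => ?_
    rw [inner_neg_left, inner_neg_right]
  have hSB : S ⊆ { z : EuclideanSpace ℝ (Fin m) | ∀ x, ⟪x, z⟫ ≤ normY x } := by
    rintro z ⟨u, rfl⟩ x
    have hzx := key u x
    simp only [inner_neg_left] at hzx ⊢
    rw [hzx, hnorm' x]
    refine Finset.sum_le_sum fun i _ => ?_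
    split_ifs with h1 h2 h2
    · linarith
    · simpa using le_abs_self _
    · simpa using neg_le_abs _
    · simp
  have hBclosed : IsClosed { z : EuclideanSpace ℝ (Fin m) | ∀ x, ⟪x, z⟫ ≤ normY x } := by
    have : { z : EuclideanSpace ℝ (Fin m) | ∀ x, ⟪x, z⟫ ≤ normY x }
        = ⋂ x, { z : EuclideanSpace ℝ (Fin m) | ⟪x, z⟫ ≤ normY x } := by
      ext; simp [Set.mem_iInter]
    rw [this]
    exact isClosed_iInter fun x =>
      isClosed_le (Continuous.inner continuous_const continuous_id) continuous_const
  have hBconvex : Convex ℝ { z : EuclideanSpace ℝ (Fin m) | ∀ x, ⟪x, z⟫ ≤ normY x } := by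
    intro a ha b hb s t hs ht hst
    intro x
    have h1 : s * ⟪x, a⟫ ≤ s * normY x := mul_le_mul_of_nonneg_left (ha x) hs
    have h2 : t * ⟪x, b⟫ ≤ t * normY x := mul_le_mul_of_nonneg_left (hb x) ht
    have heq : ⟪x, s • a + t • b⟫ = s * ⟪x, a⟫ + t * ⟪x, b⟫ := by
      rw [inner_add_right, real_inner_smul_right, real_inner_smul_right]
    calc ⟪x, s • a + t • b⟫ = s * ⟪x, a⟫ + t * ⟪x, b⟫ := heq
      _ ≤ s * normY x + t * normY x := add_le_add h1 h2
      _ = normY x := by rw [← add_mul, hst, one_mul]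
  apply Set.Subset.antisymm
  · rw [← hBclosed.closure_eq]
    exact closure_mono (convexHull_min hSB hBconvex)
  · intro z hz
    by_contra hzC
    obtain ⟨f, c, hfc, hcz⟩ := geometric_hahn_banach_closed_point
      ((convex_convexHull ℝ S).closure) isClosed_closure hzC
    set v : EuclideanSpace ℝ (Fin m) :=
      (InnerProductSpace.toDual ℝ (EuclideanSpace ℝ (Fin m))).symm f with hv
    have hf : ∀ w, f w = ⟪v, w⟫ := by
      intro w
      conv_lhs => rw [← (InnerProductSpace.toDual ℝ (EuclideanSpace ℝ (Fin m))).apply_symm_apply f]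
      rw [InnerProductSpace.toDual_apply_apply]
    set sv : EuclideanSpace ℝ (Fin m) :=
      (∑ i ∈ Finset.univ.filter (fun i => 0 < ⟪y i, v⟫), y i)
        + ∑ i ∈ Finset.univ.filter (fun i => 0 < ⟪-y i, v⟫), -y i with hsv
    have hsvS : sv ∈ S := ⟨v, rfl⟩
    have hsvC : sv ∈ closure (convexHull ℝ S) :=
      subset_closure (subset_convexHull ℝ S hsvS)
    have h1 : f sv < c := hfc sv hsvC
    have h2 : c < f z := hcz
    have hfsv : f sv = normY v := by
      rw [hf, hsv, key v v, hnorm' v]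
      refine Finset.sum_congr rfl fun i _ => ?_
      have hc : (⟪y i, v⟫ : ℝ) = ⟪v, y i⟫ := real_inner_comm _ _
      rcases lt_trichotomy (0:ℝ) ⟪v, y i⟫ with h | h | h
      · rw [if_pos (show (0:ℝ) < ⟪y i, v⟫ by rw [hc]; exact h),
          if_neg (show ¬ (0:ℝ) < -⟪y i, v⟫ by rw [hc]; push_neg; linarith),
          abs_of_pos h]; ring
      · rw [if_neg (show ¬ (0:ℝ) < ⟪y i, v⟫ by rw [hc]; push_neg; linarith),
          if_neg (show ¬ (0:ℝ) < -⟪y i, v⟫ by rw [hc]; push_neg; linarith), ← h]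
        simp
      · rw [if_neg (show ¬ (0:ℝ) < ⟪y i, v⟫ by rw [hc]; push_neg; linarith),
          if_pos (show (0:ℝ) < -⟪y i, v⟫ by rw [hc]; linarith),
          abs_of_neg h]; ring
    have hfz : f z ≤ normY v := by rw [hf]; exact hz v
    linarith
end

section
/- The group G₂ of all coordinate permutations of {1,…,n+1}, acting on the n-dimensional space E = {x ∈ ℝ^{n+1} : ∑ x_i = 0}, is ample: (1/(n+1)!) ∑_{π ∈ S_{n+1}} ⟨x, π·v⟩ (π·u) = (1/n) ⟨u, v⟩ x for all u, v, x ∈ E. -/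
open scoped RealInnerProductSpace

/-- The permutation action of `π` on `ℝ^{n+1}`. -/
noncomputable def permCoordAct {n : ℕ} (π : Equiv.Perm (Fin (n + 1)))
    (u : EuclideanSpace ℝ (Fin (n + 1))) : EuclideanSpace ℝ (Fin (n + 1)) :=
  WithLp.toLp 2 (fun i => u (π.symm i))

section Aux

variable {n : ℕ} (u v : EuclideanSpace ℝ (Fin (n + 1)))

/-- The key sum `S j k = ∑_σ v (σ j) * u (σ k)`. -/
noncomputable def permS (j k : Fin (n + 1)) : ℝ :=
  ∑ σ : Equiv.Perm (Fin (n + 1)), v (σ j) * u (σ k)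

lemma permS_conj (τ : Equiv.Perm (Fin (n + 1))) (j k : Fin (n + 1)) :
    permS u v (τ j) (τ k) = permS u v j k := by
  unfold permS
  exact Fintype.sum_equiv (Equiv.mulRight τ) _ _ (fun σ => by simp)

lemma permS_diag (c : ℝ) (hc : c = ∑ a, v a * u a) (k : Fin (n + 1)) :
    permS u v k k = (n.factorial : ℝ) * c := by
  have hall : ∀ k' : Fin (n + 1), permS u v k' k' = permS u v k k := by
    intro k'
    have := permS_conj u v (Equiv.swap k k') k' k'
    simpa [Equiv.swap_apply_right] using this.symm
  have hsum : ∑ k' : Fin (n + 1), permS u v k' k'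
      = ((n + 1).factorial : ℝ) * c := by
    unfold permS
    rw [Finset.sum_comm]
    have : ∀ σ : Equiv.Perm (Fin (n + 1)),
        ∑ k' : Fin (n + 1), v (σ k') * u (σ k') = c := by
      intro σ
      rw [hc]
      exact Equiv.sum_comp σ (fun a => v a * u a)
    rw [Finset.sum_congr rfl (fun σ _ => this σ), Finset.sum_const]
    simp [Fintype.card_perm]
  have hcard : ∑ k' : Fin (n + 1), permS u v k' k'
      = ((n : ℝ) + 1) * permS u v k k := by
    rw [Finset.sum_congr rfl (fun k' _ => hall k'), Finset.sum_const, Finset.card_univ,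
      Fintype.card_fin, nsmul_eq_mul]
    push_cast; ring
  have hfac : ((n + 1).factorial : ℝ) = ((n : ℝ) + 1) * (n.factorial : ℝ) := by
    rw [Nat.factorial_succ]; push_cast; ring
  have hne : ((n : ℝ) + 1) ≠ 0 := by positivity
  have h' : ((n : ℝ) + 1) * permS u v k k = ((n : ℝ) + 1) * ((n.factorial : ℝ) * c) :=
    hcard.symm.trans (hsum.trans (by rw [hfac]; ring))
  exact mul_left_cancel₀ hne h'

lemma permS_col_sum (hv : ∑ i, v i = 0) (k : Fin (n + 1)) :
    ∑ j : Fin (n + 1), permS u v j k = 0 := by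
  unfold permS
  rw [Finset.sum_comm]
  apply Finset.sum_eq_zero
  intro σ _
  rw [← Finset.sum_mul]
  rw [Equiv.sum_comp σ v, hv, zero_mul]

lemma permS_off_diag (hv : ∑ i, v i = 0) {j k : Fin (n + 1)} (hjk : j ≠ k) :
    (n : ℝ) * permS u v j k = - permS u v k k := by
  have hall : ∀ j' : Fin (n + 1), j' ≠ k → permS u v j' k = permS u v j k := by
    intro j' hj'
    rcases eq_or_ne j' j with rfl | hne
    · rfl
    · have := permS_conj u v (Equiv.swap j j') j' k
      rw [Equiv.swap_apply_right, Equiv.swap_apply_of_ne_of_ne (Ne.symm hjk) (Ne.symm hj')]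
        at this
      exact this.symm
  have hsum := permS_col_sum u v hv k
  rw [← Finset.add_sum_erase _ _ (Finset.mem_univ k)] at hsum
  rw [Finset.sum_congr rfl (fun j' hj' =>
    hall j' (Finset.ne_of_mem_erase hj')), Finset.sum_const] at hsum
  have hcard : (Finset.univ.erase k).card = n := by
    rw [Finset.card_erase_of_mem (Finset.mem_univ k)]
    simp
  rw [hcard, nsmul_eq_mul] at hsum
  linarith

end Aux

/-- The group `G₂` of all coordinate permutations of `{1,…,n+1}` acting on the
`n`-dimensional subspace `E = {x ∈ ℝ^{n+1} : ∑ x i = 0}` is ample: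
`(1/(n+1)!) ∑_{π} ⟨x, π·v⟩ (π·u) = (1/n) ⟨u,v⟩ x` for `u, v, x ∈ E`. -/
theorem stmt_5 (n : ℕ) (hn : 0 < n)
    (u v x : EuclideanSpace ℝ (Fin (n + 1)))
    (hu : ∑ i, u i = 0) (hv : ∑ i, v i = 0) (hx : ∑ i, x i = 0) :
    (((n + 1).factorial : ℝ))⁻¹ •
      ∑ π : Equiv.Perm (Fin (n + 1)), ⟪x, permCoordAct π v⟫ • permCoordAct π u
    = ((n : ℝ)⁻¹ * ⟪u, v⟫) • x := by
  set c : ℝ := ∑ a, v a * u a with hc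
  have hinner : ⟪u, v⟫ = c := by
    rw [hc, PiLp.inner_apply]
    simp [RCLike.inner_apply, mul_comm]
  ext k
  have hLHS : (∑ π : Equiv.Perm (Fin (n + 1)),
      ⟪x, permCoordAct π v⟫ • permCoordAct π u) k
      = ∑ j : Fin (n + 1), x j * permS u v j k := by
    rw [WithLp.ofLp_sum, Finset.sum_apply]
    have step1 : ∀ π : Equiv.Perm (Fin (n + 1)),
        (⟪x, permCoordAct π v⟫ • permCoordAct π u) k
        = ∑ j, x j * v (π.symm j) * u (π.symm k) := by
      intro π
      have : ⟪x, permCoordAct π v⟫ = ∑ j, x j * v (π.symm j) := by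
        rw [PiLp.inner_apply]
        simp [RCLike.inner_apply, permCoordAct, mul_comm]
      rw [PiLp.smul_apply, this]
      simp only [permCoordAct, PiLp.toLp_apply, smul_eq_mul, Finset.sum_mul]
    rw [Finset.sum_congr rfl (fun π _ => step1 π)]
    rw [show (∑ π : Equiv.Perm (Fin (n + 1)), ∑ j, x j * v (π.symm j) * u (π.symm k))
        = ∑ σ : Equiv.Perm (Fin (n + 1)), ∑ j, x j * v (σ j) * u (σ k) from
      Fintype.sum_equiv (Equiv.inv (Equiv.Perm (Fin (n + 1)))) _ _ (fun σ => rfl)]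
    rw [Finset.sum_comm]
    apply Finset.sum_congr rfl
    intro j _
    unfold permS
    rw [Finset.mul_sum]
    exact Finset.sum_congr rfl (fun σ _ => by ring)
  have hdiag := permS_diag u v c hc k
  have hsum : ∑ j : Fin (n + 1), x j * permS u v j k
      = x k * ((n.factorial : ℝ) * c) * (1 + (n : ℝ)⁻¹) := by
    rw [← Finset.add_sum_erase _ _ (Finset.mem_univ k), hdiag]
    have hne : (n : ℝ) ≠ 0 := Nat.cast_ne_zero.mpr hn.ne'
    have hoff : ∀ j ∈ Finset.univ.erase k,
        x j * permS u v j k = x j * (-(((n.factorial : ℝ) * c)) / n) := by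
      intro j hj
      have h1 := permS_off_diag u v hv (Finset.ne_of_mem_erase hj)
      rw [hdiag] at h1
      congr 1
      field_simp
      linarith
    rw [Finset.sum_congr rfl hoff, ← Finset.sum_mul]
    have herase : ∑ j ∈ Finset.univ.erase k, x j = - x k := by
      have := Finset.add_sum_erase _ x (Finset.mem_univ k)
      rw [hx] at this
      linarith
    rw [herase]
    field_simp
  simp only [PiLp.smul_apply, smul_eq_mul]
  rw [hLHS, hsum, hinner]
  have hfac : ((n + 1).factorial : ℝ) = ((n : ℝ) + 1) * (n.factorial : ℝ) := by
    rw [Nat.factorial_succ]; push_cast; ring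
  have hne : (n : ℝ) ≠ 0 := Nat.cast_ne_zero.mpr hn.ne'
  have hfne : (n.factorial : ℝ) ≠ 0 := Nat.cast_ne_zero.mpr n.factorial_ne_zero
  rw [hfac]
  field_simp
end

section
/- For every integer n ≥ 2, the function F(φ) = ∑_{k=0}^{2n+1} (sin(kπ/(n+1) + φ))^{2n} is constant in φ. -/
/-!
Euler's formula writes `sin x ^ p` as a trigonometric polynomial whose frequencies `2j - p` all
have absolute value at most `p`. Summing `exp (i m x)` over the `N` equally spaced points
`x + 2πk/N` gives `0` unless `N ∣ m`, so when `p < N` only the constant term survives and the sum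
does not depend on `x`. The theorem is the case `N = 2n + 2`, `p = 2n`.
-/

open Finset Real

theorem Complex.sum_range_exp_int_mul_two_pi_div (N : ℕ) (m : ℤ) :
    ∑ k ∈ range N, exp (m * (k * (2 * π / N)) * I) = if (N : ℤ) ∣ m then (N : ℂ) else 0 := by
  rcases eq_or_ne N 0 with rfl | hN
  · simp
  set ζ := exp (2 * π * I / N)
  have hζ : IsPrimitiveRoot ζ N := isPrimitiveRoot_exp N hN
  have hterm (k : ℕ) : exp (m * (k * (2 * π / N)) * I) = (ζ ^ m) ^ k := by
    rw [← zpow_natCast, ← zpow_mul, ← exp_int_mul]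
    congr 1
    push_cast
    ring
  simp only [hterm]
  split_ifs with hdvd
  · simp [(hζ.zpow_eq_one_iff_dvd m).mpr hdvd]
  · have hne : ζ ^ m ≠ 1 := fun h => hdvd ((hζ.zpow_eq_one_iff_dvd m).mp h)
    rw [geom_sum_eq hne, ← zpow_natCast, ← zpow_mul, mul_comm, zpow_mul, zpow_natCast,
      hζ.pow_eq_one, one_zpow, sub_self, zero_div]

theorem Complex.sum_range_sum_mul_exp_shift {ι : Type*} (s : Finset ι) (m : ι → ℤ) (c : ι → ℂ)
    (N : ℕ) (hm : ∀ i ∈ s, |m i| < N) (z : ℂ) :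
    ∑ k ∈ range N, ∑ i ∈ s, c i * exp (m i * (z + k * (2 * π / N)) * I)
      = N * ∑ i ∈ s with m i = 0, c i := by
  have hinner (i) (hi : i ∈ s) :
      ∑ k ∈ range N, c i * exp (m i * (z + k * (2 * π / N)) * I)
        = if m i = 0 then N * c i else 0 := by
    have hdvd : (N : ℤ) ∣ m i ↔ m i = 0 :=
      ⟨fun h => Int.eq_zero_of_abs_lt_dvd h (hm i hi), fun h => h ▸ dvd_zero _⟩
    simp_rw [mul_add, add_mul, exp_add]
    rw [← Finset.mul_sum, ← Finset.mul_sum, sum_range_exp_int_mul_two_pi_div]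
    simp only [hdvd]
    split_ifs with h0 <;> simp [h0, mul_comm]
  rw [Finset.sum_comm, Finset.sum_congr rfl hinner, Finset.sum_ite, Finset.sum_const_zero,
    add_zero, Finset.mul_sum]

theorem Complex.sin_pow_mul_two_I_pow (p : ℕ) (z : ℂ) :
    sin z ^ p * (2 * I) ^ p
      = ∑ j ∈ range (p + 1), (-1) ^ (j + p) * (p.choose j : ℂ) * exp ((2 * j - p : ℤ) * z * I) := by
  have hsin : sin z * (2 * I) = exp (z * I) - exp (-z * I) := by
    rw [sin]
    linear_combination (exp (-z * I) - exp (z * I)) * I_sq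
  rw [← mul_pow, hsin, sub_pow]
  refine Finset.sum_congr rfl fun j hj => ?_
  have hjp : j ≤ p := Nat.lt_succ_iff.mp (mem_range.mp hj)
  have hexp : exp (z * I) ^ j * exp (-z * I) ^ (p - j) = exp ((2 * j - p : ℤ) * z * I) := by
    rw [← exp_nat_mul, ← exp_nat_mul, ← exp_add]
    congr 1
    push_cast [hjp]
    ring
  rw [← hexp]
  ring

theorem Complex.sum_range_sin_add_pow_mul_two_I_pow {p N : ℕ} (hp : p < N) (z : ℂ) :
    (∑ k ∈ range N, sin (z + k * (2 * π / N)) ^ p) * (2 * I) ^ p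
      = N * ∑ j ∈ range (p + 1) with 2 * j = p, (-1) ^ (j + p) * (p.choose j : ℂ) := by
  rw [Finset.sum_mul]
  simp_rw [sin_pow_mul_two_I_pow]
  rw [sum_range_sum_mul_exp_shift _ _ _ N (fun j hj => ?_) z]
  · congr 2
    exact Finset.filter_congr fun j _ => by omega
  · have hjp : j ≤ p := Nat.lt_succ_iff.mp (mem_range.mp hj)
    rw [abs_lt]
    constructor <;> omega

theorem Real.sum_range_sin_add_pow_eq {p N : ℕ} (hp : p < N) (x y : ℝ) :
    ∑ k ∈ range N, sin (x + k * (2 * π / N)) ^ p = ∑ k ∈ range N, sin (y + k * (2 * π / N)) ^ p := by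
  have hcomplex := (Complex.sum_range_sin_add_pow_mul_two_I_pow hp x).trans
    (Complex.sum_range_sin_add_pow_mul_two_I_pow hp y).symm
  rw [mul_left_inj' (pow_ne_zero _ (by simp))] at hcomplex
  exact_mod_cast hcomplex

theorem stmt_8_general (n : ℕ) (φ ψ : ℝ) :
    ∑ k ∈ Finset.range (2 * n + 2), Real.sin ((k : ℝ) * Real.pi / (n + 1) + φ) ^ (2 * n)
      = ∑ k ∈ Finset.range (2 * n + 2), Real.sin ((k : ℝ) * Real.pi / (n + 1) + ψ) ^ (2 * n) := by
  have hpoints (k : ℕ) (x : ℝ) :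
      (k : ℝ) * π / (n + 1) + x = x + k * (2 * π / (2 * n + 2 : ℕ)) := by
    push_cast
    field_simp
    ring
  simp only [hpoints]
  exact Real.sum_range_sin_add_pow_eq (by omega) φ ψ

/-- For every integer `n ≥ 2` the function
`F φ = ∑_{k=0}^{2n+1} (sin (kπ/(n+1) + φ))^{2n}` is constant in `φ`. -/
theorem stmt_8 (n : ℕ) (hn : 2 ≤ n) (φ ψ : ℝ) :
    ∑ k ∈ Finset.range (2 * n + 2), Real.sin ((k : ℝ) * Real.pi / (n + 1) + φ) ^ (2 * n)
      = ∑ k ∈ Finset.range (2 * n + 2), Real.sin ((k : ℝ) * Real.pi / (n + 1) + ψ) ^ (2 * n) :=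
  stmt_8_general n φ ψ
end

section
/- For every integer n ≥ 2, the 2-dimensional subspace of ℓ_{2n}^{2n+2} spanned by the vectors c = (cos(kπ/(n+1)))_{k=0}^{2n+1} and s = (sin(kπ/(n+1)))_{k=0}^{2n+1} is isometric (up to a constant multiple of the norm) to the 2-dimensional Euclidean space: there is a constant c_n > 0 with ‖u₁ c + u₂ s‖_{2n} = c_n (u₁² + u₂²)^{1/2} for all u₁, u₂ ∈ ℝ. -/
/-!
Write `(u₁, u₂) = r (cos φ, sin φ)`; then the `k`-th coordinate is `r cos (2πk/N - φ)` with
`N = 2n + 2`. Expanding `(2 cos x)^(2n) = (e^{ix} + e^{-ix})^(2n)` binomially and summing over `k`,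
the term `e^{i(2j-2n)x}` averages to zero over the `N`-th roots of unity unless `N ∣ 2j - 2n`,
which, as `|2j - 2n| ≤ 2n < N`, forces `j = n`. Hence `∑ₖ cos^(2n) (2πk/N - φ) = N·C(2n,n)/4ⁿ`
is independent of `φ`, and the `ℓ_{2n}`-norm is `r` times the `2n`-th root of this constant.
-/

open Finset

theorem IsPrimitiveRoot.geom_sum_zpow {R : Type*} [Field R] {ζ : R} {N : ℕ}
    (hζ : IsPrimitiveRoot ζ N) (ℓ : ℤ) :
    ∑ k ∈ range N, (ζ ^ ℓ) ^ k = if (N : ℤ) ∣ ℓ then (N : R) else 0 := by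
  split_ifs with hdvd
  · simp [(hζ.zpow_eq_one_iff_dvd ℓ).2 hdvd]
  · have hne : ζ ^ ℓ ≠ 1 := mt (hζ.zpow_eq_one_iff_dvd ℓ).1 hdvd
    have hN : (ζ ^ ℓ) ^ N = 1 := by
      rw [← zpow_natCast, ← zpow_mul, mul_comm, zpow_mul, zpow_natCast, hζ.pow_eq_one, one_zpow]
    rw [geom_sum_eq hne, hN, sub_self, zero_div]

namespace Complex

theorem two_cos_pow (x : ℂ) (m : ℕ) :
    (2 * cos x) ^ m =
      ∑ j ∈ range (m + 1), (m.choose j : ℂ) * exp (((2 * j - m : ℤ) : ℂ) * x * I) := by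
  rw [two_cos, add_pow]
  refine sum_congr rfl fun j hj => ?_
  have hjm : j ≤ m := Nat.lt_succ_iff.mp (mem_range.mp hj)
  rw [← exp_nat_mul, ← exp_nat_mul, ← exp_add, mul_comm]
  congr 2
  push_cast [Nat.cast_sub hjm]
  ring

theorem sum_two_cos_pow_of_lt {N p : ℕ} (h : 2 * p < N) (φ : ℂ) :
    ∑ k ∈ range N, (2 * cos (φ + 2 * Real.pi * k / N)) ^ (2 * p) = N * (2 * p).choose p := by
  have hζ := isPrimitiveRoot_exp N (by omega)
  calc ∑ k ∈ range N, (2 * cos (φ + 2 * Real.pi * k / N)) ^ (2 * p)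
      = ∑ j ∈ range (2 * p + 1), ((2 * p).choose j : ℂ) * exp ((2 * j - 2 * p : ℤ) * φ * I) *
          ∑ k ∈ range N, (exp (2 * Real.pi * I / N) ^ (2 * j - 2 * p : ℤ)) ^ k := by
        simp_rw [two_cos_pow, mul_sum]
        rw [sum_comm]
        refine sum_congr rfl fun j _ => sum_congr rfl fun k _ => ?_
        rw [← exp_int_mul, ← exp_nat_mul, mul_assoc _ (cexp _), ← exp_add]
        push_cast
        congr 3
        ring
    _ = ∑ j ∈ range (2 * p + 1), if j = p then (N * (2 * p).choose p : ℂ) else 0 := by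
        refine sum_congr rfl fun j hj => ?_
        have hj : j ≤ 2 * p := Nat.lt_succ_iff.mp (mem_range.mp hj)
        have hdvd : (N : ℤ) ∣ 2 * j - 2 * p ↔ j = p := by
          refine ⟨fun hd => ?_, fun hjp => by simp [hjp]⟩
          have := Int.eq_zero_of_abs_lt_dvd hd (by rw [abs_lt]; omega)
          omega
        rw [hζ.geom_sum_zpow, if_congr hdvd rfl rfl]
        split_ifs with hjp
        · subst hjp
          simp only [sub_self, Int.cast_zero, zero_mul, exp_zero, mul_one]
          ring
        · simp
    _ = N * (2 * p).choose p := by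
        rw [sum_ite_eq', if_pos (mem_range.2 (by omega))]

end Complex

namespace Real

theorem sum_cos_pow_of_lt {N p : ℕ} (h : 2 * p < N) (φ : ℝ) :
    ∑ k ∈ range N, cos (φ + 2 * π * k / N) ^ (2 * p) = N * (2 * p).choose p / 4 ^ p := by
  have hC := Complex.sum_two_cos_pow_of_lt h φ
  rw [eq_div_iff (by positivity), mul_comm]
  apply Complex.ofReal_injective
  push_cast
  rw [← hC, mul_sum]
  refine sum_congr rfl fun k _ => ?_
  rw [mul_pow, pow_mul 2]
  norm_num

theorem mul_cos_add_mul_sin_eq (u₁ u₂ t : ℝ) :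
    u₁ * cos t + u₂ * sin t =
      √(u₁ ^ 2 + u₂ ^ 2) * cos (t - Complex.arg (u₁ + u₂ * Complex.I)) := by
  have hre := Complex.norm_mul_cos_arg (u₁ + u₂ * Complex.I)
  have him := Complex.norm_mul_sin_arg (u₁ + u₂ * Complex.I)
  simp only [Complex.add_re, Complex.add_im, Complex.ofReal_re, Complex.ofReal_im,
    Complex.mul_re, Complex.mul_im, Complex.I_re, Complex.I_im] at hre him
  rw [cos_sub, ← Complex.norm_add_mul_I]
  linear_combination -cos t * hre - sin t * him

end Real

/-- For `n ≥ 2`, the 2-dimensional subspace of `ℓ_{2n}^{2n+2}` spanned by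
`c = (cos (kπ/(n+1)))_k` and `s = (sin (kπ/(n+1)))_k` is, up to a constant multiple of the
norm, isometric to 2-dimensional Euclidean space:
`‖u₁ c + u₂ s‖_{2n} = c_n √(u₁² + u₂²)` for some constant `c_n > 0`. -/
theorem stmt_9 (n : ℕ) (hn : 2 ≤ n) :
    ∃ c : ℝ, 0 < c ∧ ∀ u₁ u₂ : ℝ,
      ((∑ k ∈ Finset.range (2 * n + 2),
          |u₁ * Real.cos ((k : ℝ) * Real.pi / (n + 1))
            + u₂ * Real.sin ((k : ℝ) * Real.pi / (n + 1))| ^ (2 * n) : ℝ)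
        ^ ((2 * n : ℝ))⁻¹)
      = c * Real.sqrt (u₁ ^ 2 + u₂ ^ 2) := by
  set K : ℝ := (2 * n + 2 : ℕ) * (2 * n).choose n / 4 ^ n
  have hK : 0 < K := by
    have := Nat.choose_pos (by omega : n ≤ 2 * n)
    positivity
  refine ⟨K ^ ((2 * n : ℝ))⁻¹, by positivity, fun u₁ u₂ => ?_⟩
  have hsum : ∑ k ∈ range (2 * n + 2),
      |u₁ * Real.cos ((k : ℝ) * Real.pi / (n + 1)) + u₂ * Real.sin ((k : ℝ) * Real.pi / (n + 1))|
        ^ (2 * n) = √(u₁ ^ 2 + u₂ ^ 2) ^ (2 * n) * K := by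
    simp_rw [(even_two_mul n).pow_abs, Real.mul_cos_add_mul_sin_eq, mul_pow, ← mul_sum]
    have hcos : _ = K :=
      Real.sum_cos_pow_of_lt (N := 2 * n + 2) (by omega) (-Complex.arg (u₁ + u₂ * Complex.I))
    rw [← hcos]
    refine congrArg _ (sum_congr rfl fun k _ => ?_)
    congr 2
    push_cast
    field_simp
    ring
  rw [hsum, Real.mul_rpow (by positivity) hK.le, mul_comm,
    show (2 * n : ℝ) = (2 * n : ℕ) by push_cast; rfl,
    Real.pow_rpow_inv_natCast (by positivity) (by omega)]
end

section
/- Let x = ∑ a_i e_i and y = ∑ b_i e_i be two elements of ℓ¹ such that the set {a_i / b_i : i ∈ ℕ, b_i ≠ 0} is dense in ℝ. Then the 2-dimensional subspace span{x, y} of ℓ¹ is strictly convex. -/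
/-!
Equality `‖u + v‖ = ‖u‖ + ‖v‖` in `ℓ¹` forces `u i * v i ≥ 0` for every `i`. For
`u = α x + β y` and `v = γ x + δ y` and `b i ≠ 0`, dividing by `(b i)²` shows that the product
of affine functions `(α t + β) (γ t + δ)` is nonnegative at `t = a i / b i`, hence, by density,
for every real `t`. Its discriminant is `(α δ - β γ)²`, so `u` and `v` are proportional, and a
proportional pair of unit vectors with `‖u + v‖ = 2` coincides.
-/

namespace lp

variable {ι : Type*} {E : ι → Type*} [∀ i, NormedAddCommGroup (E i)]

theorem hasSum_norm_one (f : lp E 1) : HasSum (fun i => ‖f i‖) ‖f‖ := by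
  simpa using lp.hasSum_norm (p := 1) (by norm_num) f

theorem norm_add_apply_eq_of_norm_add_eq {f g : lp E 1} (h : ‖f + g‖ = ‖f‖ + ‖g‖)
    (i : ι) : ‖f i + g i‖ = ‖f i‖ + ‖g i‖ := by
  refine (norm_add_le _ _).eq_of_not_lt fun hlt => h.not_lt ?_
  calc ‖f + g‖ = ∑' j, ‖f j + g j‖ := (hasSum_norm_one (f + g)).tsum_eq.symm
    _ < ∑' j, (‖f j‖ + ‖g j‖) :=
      Summable.tsum_lt_tsum (fun j => norm_add_le _ _) hlt (hasSum_norm_one (f + g)).summable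
        ((hasSum_norm_one f).add (hasSum_norm_one g)).summable
    _ = ‖f‖ + ‖g‖ := ((hasSum_norm_one f).add (hasSum_norm_one g)).tsum_eq

theorem apply_mul_apply_nonneg_of_norm_add_eq {f g : lp (fun _ : ι => ℝ) 1}
    (h : ‖f + g‖ = ‖f‖ + ‖g‖) (i : ι) : 0 ≤ f i * g i := by
  have hi := norm_add_apply_eq_of_norm_add_eq h i
  simp only [Real.norm_eq_abs] at hi
  rcases (abs_add_eq_add_abs_iff _ _).1 hi with ⟨hf, hg⟩ | ⟨hf, hg⟩
  · exact mul_nonneg hf hg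
  · exact mul_nonneg_of_nonpos_of_nonpos hf hg

end lp

theorem mul_eq_mul_of_forall_affine_mul_nonneg {K : Type*} [Field K] [LinearOrder K]
    [IsStrictOrderedRing K] {α β γ δ : K} (h : ∀ t, 0 ≤ (α * t + β) * (γ * t + δ)) :
    α * δ = β * γ := by
  have hdisc := discrim_le_zero (a := α * γ) (b := α * δ + β * γ) (c := β * δ)
    fun t => by linarith [h t]
  have hsq : discrim (α * γ) (α * δ + β * γ) (β * δ) = (α * δ - β * γ) ^ 2 := by
    rw [discrim]; ring
  rw [hsq] at hdisc
  exact sub_eq_zero.1 (pow_eq_zero_iff two_ne_zero |>.1 (le_antisymm hdisc (sq_nonneg _)))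

theorem exists_smul_eq_of_mul_eq_mul {K M : Type*} [Field K] [AddCommGroup M] [Module K M]
    {x y : M} {α β γ δ : K} (hdet : α * δ = β * γ) (hu : α • x + β • y ≠ 0) :
    ∃ c : K, c • (α • x + β • y) = γ • x + δ • y := by
  by_cases hα : α = 0
  · have hβ : β ≠ 0 := by rintro rfl; simp [hα] at hu
    refine ⟨δ / β, ?_⟩
    rw [smul_add, smul_smul, smul_smul, div_mul_cancel₀ _ hβ, div_mul_eq_mul_div, mul_comm δ,
      hdet, mul_div_cancel_left₀ _ hβ]
  · refine ⟨γ / α, ?_⟩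
    rw [smul_add, smul_smul, smul_smul, div_mul_cancel₀ _ hα, div_mul_eq_mul_div, mul_comm γ,
      ← hdet, mul_div_cancel_left₀ _ hα]

theorem sameRay_smul_of_norm_add_eq {E : Type*} [NormedAddCommGroup E] [NormedSpace ℝ E]
    {u : E} {c : ℝ} (h : ‖u + c • u‖ = ‖u‖ + ‖c • u‖) : SameRay ℝ u (c • u) := by
  rcases eq_or_ne u 0 with rfl | hu
  · exact SameRay.zero_left _
  have habs : |1 + c| = |1| + |c| := by
    rw [← one_smul ℝ u, smul_smul, mul_one, ← add_smul, norm_smul, norm_smul, norm_smul,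
      ← add_mul] at h
    simpa using mul_right_cancel₀ (norm_ne_zero_iff.2 hu) h
  rcases (abs_add_eq_add_abs_iff _ _).1 habs with ⟨-, hc⟩ | ⟨h1, -⟩
  · exact SameRay.sameRay_nonneg_smul_right u hc
  · norm_num at h1

/-- Lindenstrauss: If `x = ∑ a i • e i` and `y = ∑ b i • e i` are elements of
`ℓ¹` such that `{a i / b i : b i ≠ 0}` is dense in `ℝ`, then the 2-dimensional subspace
`span {x, y}` of `ℓ¹` is strictly convex. -/
theorem stmt_15 (x y : lp (fun _ : ℕ => ℝ) 1)
    (hdense : Dense {r : ℝ | ∃ i : ℕ, (y : ∀ _ : ℕ, ℝ) i ≠ 0 ∧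
      r = (x : ∀ _ : ℕ, ℝ) i / (y : ∀ _ : ℕ, ℝ) i}) :
    ∀ u v : lp (fun _ : ℕ => ℝ) 1,
      u ∈ Submodule.span ℝ {x, y} → v ∈ Submodule.span ℝ {x, y} →
      ‖u‖ = 1 → ‖v‖ = 1 → u ≠ v → ‖u + v‖ < 2 := by
  intro u v hu hv hnu hnv hne
  refine ((norm_add_le u v).trans_eq (by rw [hnu, hnv]; norm_num)).lt_of_ne fun h2 => hne ?_
  have hadd : ‖u + v‖ = ‖u‖ + ‖v‖ := by rw [h2, hnu, hnv]; norm_num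
  have hu0 : u ≠ 0 := norm_ne_zero_iff.1 (by rw [hnu]; exact one_ne_zero)
  obtain ⟨α, β, rfl⟩ := Submodule.mem_span_pair.1 hu
  obtain ⟨γ, δ, rfl⟩ := Submodule.mem_span_pair.1 hv
  have hq : ∀ t : ℝ, 0 ≤ (α * t + β) * (γ * t + δ) := by
    refine fun t => hdense.induction ?_ (isClosed_le continuous_const (by fun_prop)) t
    rintro _ ⟨i, hyi, rfl⟩
    have hi := lp.apply_mul_apply_nonneg_of_norm_add_eq hadd i
    simp only [lp.coeFn_add, lp.coeFn_smul, Pi.add_apply, Pi.smul_apply, smul_eq_mul] at hi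
    have hquot : (α * (x i / y i) + β) * (γ * (x i / y i) + δ) =
        (α * x i + β * y i) * (γ * x i + δ * y i) / y i ^ 2 := by
      field_simp
    exact hquot ▸ div_nonneg hi (sq_nonneg _)
  obtain ⟨c, hc⟩ := exists_smul_eq_of_mul_eq_mul (mul_eq_mul_of_forall_affine_mul_nonneg hq) hu0
  rw [← hc] at hadd hnv ⊢
  exact (sameRay_smul_of_norm_add_eq hadd).eq_of_norm_eq (hnu.trans hnv.symm)
end

section
/- Let X be a separable Banach space that is almost ω-homogeneous (for any finite-dimensional subspaces A ⊆ B of X, any ε > 0 and any isometric embedding i : A → X, there is an embedding î : B → X extending i with ‖î‖‖î⁻¹‖ ≤ 1+ε). Then for every finite-dimensional subspace A of X and every isometric embedding i : A → X, the relative projection constants coincide: λ(A ↪ X) = λ(i(A) ↪ X). -/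
/-- The relative projection constant of a subspace `Y` of `X`. -/
noncomputable def relProjConst {X : Type*} [NormedAddCommGroup X] [NormedSpace ℝ X]
    (Y : Submodule ℝ X) : ℝ :=
  sInf {c | ∃ P : X →L[ℝ] X, (∀ x, P x ∈ Y) ∧ (∀ y ∈ Y, P y = y) ∧ c = ‖P‖}

open Filter Topology

section Aux

variable {X : Type*} [NormedAddCommGroup X] [NormedSpace ℝ X]

lemma relProjConst_set_bddBelow (Y : Submodule ℝ X) :
    BddBelow {c | ∃ P : X →L[ℝ] X, (∀ x, P x ∈ Y) ∧ (∀ y ∈ Y, P y = y) ∧ c = ‖P‖} := by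
  refine ⟨0, ?_⟩
  rintro c ⟨P, -, -, rfl⟩
  exact norm_nonneg P

lemma relProjConst_nonneg (Y : Submodule ℝ X) : 0 ≤ relProjConst Y := by
  apply Real.sInf_nonneg
  rintro c ⟨P, -, -, rfl⟩
  exact norm_nonneg P

lemma relProjConst_le (Y : Submodule ℝ X) {P : X →L[ℝ] X} (h1 : ∀ x, P x ∈ Y)
    (h2 : ∀ y ∈ Y, P y = y) {μ : ℝ} (hP : ‖P‖ ≤ μ) : relProjConst Y ≤ μ :=
  le_trans (csInf_le (relProjConst_set_bddBelow Y) ⟨P, h1, h2, rfl⟩) hP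

/-- Gluing finitely-supported projections (on all finite-dimensional subspaces containing `A'`)
into a global projection, by an ultrafilter limit argument. -/
lemma glue (A' : Submodule ℝ X) [FiniteDimensional ℝ A'] (μ : ℝ) (hμ : 0 ≤ μ)
    (h : ∀ B : Submodule ℝ X, A' ≤ B → FiniteDimensional ℝ B →
      ∃ Q : ↥B →L[ℝ] X, (∀ b, Q b ∈ A') ∧ (∀ b : ↥B, (b : X) ∈ A' → Q b = (b : X)) ∧
        ∀ b, ‖Q b‖ ≤ μ * ‖b‖) :
    relProjConst A' ≤ μ := by
  classical
  let D := {B : Submodule ℝ X // FiniteDimensional ℝ B}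
  haveI : SemilatticeSup D :=
    Subtype.semilatticeSup (fun B C hB hC => by
      haveI := hB; haveI := hC; exact inferInstance)
  haveI : Nonempty D := ⟨⟨⊥, inferInstance⟩⟩
  haveI : IsDirected D (· ≤ ·) :=
    ⟨fun a b => ⟨⟨a.1 ⊔ b.1, by haveI := a.2; haveI := b.2; exact inferInstance⟩,
      show a.1 ≤ a.1 ⊔ b.1 from le_sup_left, show b.1 ≤ a.1 ⊔ b.1 from le_sup_right⟩⟩
  haveI : (atTop : Filter D).NeBot := atTop_neBot
  let U : Ultrafilter D := Ultrafilter.of atTop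
  have hU : (U : Filter D) ≤ atTop := Ultrafilter.of_le _
  -- the local projections
  let Q : ∀ B : D, A' ≤ B.1 → (↥B.1 →L[ℝ] X) := fun B hB => (h B.1 hB B.2).choose
  have hQ1 : ∀ (B : D) (hB : A' ≤ B.1) (b : ↥B.1), Q B hB b ∈ A' :=
    fun B hB => (h B.1 hB B.2).choose_spec.1
  have hQ2 : ∀ (B : D) (hB : A' ≤ B.1) (b : ↥B.1), (b : X) ∈ A' → Q B hB b = (b : X) :=
    fun B hB => (h B.1 hB B.2).choose_spec.2.1
  have hQ3 : ∀ (B : D) (hB : A' ≤ B.1) (b : ↥B.1), ‖Q B hB b‖ ≤ μ * ‖b‖ :=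
    fun B hB => (h B.1 hB B.2).choose_spec.2.2
  let q : D → X → X := fun B x =>
    if hc : A' ≤ B.1 ∧ x ∈ B.1 then Q B hc.1 ⟨x, hc.2⟩ else 0
  have ev : ∀ x : X, ∀ᶠ B in (U : Filter D), A' ≤ B.1 ∧ x ∈ B.1 := by
    intro x
    apply hU
    filter_upwards [eventually_ge_atTop
      (⟨A' ⊔ Submodule.span ℝ {x}, inferInstance⟩ : D)] with B hB
    refine ⟨le_trans le_sup_left hB, ?_⟩
    have hx : x ∈ A' ⊔ Submodule.span ℝ {x} :=
      Submodule.mem_sup_right (Submodule.subset_span rfl)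
    exact hB hx
  have key : ∀ x : X, ∃ y : A', Tendsto (fun B => q B x) (U : Filter D) (𝓝 (y : X)) ∧
      ‖(y : X)‖ ≤ μ * ‖x‖ := by
    intro x
    set s : Set X := (↑) '' (Metric.closedBall (0 : A') (μ * ‖x‖)) with hs_def
    have hs : IsCompact s := (isCompact_closedBall _ _).image continuous_subtype_val
    have hmem : ∀ᶠ B in (U : Filter D), q B x ∈ s := by
      filter_upwards [ev x] with B hB
      have h3 := hQ3 B hB.1 ⟨x, hB.2⟩
      refine ⟨⟨Q B hB.1 ⟨x, hB.2⟩, hQ1 B hB.1 ⟨x, hB.2⟩⟩, ?_, ?_⟩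
      · rw [Metric.mem_closedBall, dist_zero_right]
        exact h3
      · simp only [q, dif_pos hB]
    obtain ⟨a, ha, hconv⟩ := hs.ultrafilter_le_nhds (U.map (fun B => q B x))
      (by rwa [Ultrafilter.coe_map, Filter.le_principal_iff])
    obtain ⟨y, hy, rfl⟩ := ha
    refine ⟨y, hconv, ?_⟩
    rw [Metric.mem_closedBall, dist_zero_right] at hy
    exact hy
  choose lim hlim hnorm using key
  have uniq : ∀ {x : X} {z : X}, Tendsto (fun B => q B x) (U : Filter D) (𝓝 z) →
      (lim x : X) = z := fun h' => tendsto_nhds_unique (hlim _) h'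
  have hadd : ∀ x y : X, (lim (x + y) : X) = lim x + lim y := by
    intro x y
    apply uniq
    refine Tendsto.congr' ?_ ((hlim x).add (hlim y))
    filter_upwards [ev x, ev y] with B hx hy
    have hxy : A' ≤ B.1 ∧ x + y ∈ B.1 := ⟨hx.1, B.1.add_mem hx.2 hy.2⟩
    simp only [q, dif_pos hx, dif_pos hy, dif_pos hxy]
    have : (⟨x + y, hxy.2⟩ : ↥B.1) = ⟨x, hx.2⟩ + ⟨y, hy.2⟩ := by
      apply Subtype.ext; simp
    rw [this, map_add]
  have hsmul : ∀ (r : ℝ) (x : X), (lim (r • x) : X) = r • (lim x : X) := by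
    intro r x
    apply uniq
    refine Tendsto.congr' ?_ ((hlim x).const_smul r)
    filter_upwards [ev x] with B hx
    have hrx : A' ≤ B.1 ∧ r • x ∈ B.1 := ⟨hx.1, B.1.smul_mem r hx.2⟩
    simp only [q, dif_pos hx, dif_pos hrx]
    have : (⟨r • x, hrx.2⟩ : ↥B.1) = r • ⟨x, hx.2⟩ := by
      apply Subtype.ext; simp
    rw [this, map_smul]
  have hid : ∀ y ∈ A', (lim y : X) = y := by
    intro y hy
    apply uniq
    refine Tendsto.congr' ?_ tendsto_const_nhds
    filter_upwards [ev y] with B hB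
    simp only [q, dif_pos hB]
    exact (hQ2 B hB.1 ⟨y, hB.2⟩ hy).symm
  let L : X →ₗ[ℝ] X :=
    { toFun := fun x => (lim x : X)
      map_add' := hadd
      map_smul' := hsmul }
  let P : X →L[ℝ] X := L.mkContinuous μ (fun x => hnorm x)
  refine relProjConst_le A' (P := P) (fun x => (lim x).2) (fun y hy => hid y hy) ?_
  exact L.mkContinuous_norm_le hμ _

/-- The isometric equivalence of `A` onto the range of an isometric embedding `i : A → X`. -/
noncomputable def rangeEquiv (A : Submodule ℝ X) (i : ↥A →ₗᵢ[ℝ] X) :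
    ↥A ≃ₗᵢ[ℝ] ↥(LinearMap.range i.toLinearMap) :=
  { LinearEquiv.ofInjective i.toLinearMap i.injective with
    norm_map' := fun a => by
      have : ((LinearEquiv.ofInjective i.toLinearMap i.injective) a : X) = i a := rfl
      show ‖((LinearEquiv.ofInjective i.toLinearMap i.injective) a : X)‖ = ‖a‖
      rw [this, i.norm_map] }

lemma rangeEquiv_coe (A : Submodule ℝ X) (i : ↥A →ₗᵢ[ℝ] X) (a : ↥A) :
    ((rangeEquiv A i) a : X) = i a := rfl

lemma rangeEquiv_symm_coe (A : Submodule ℝ X) (i : ↥A →ₗᵢ[ℝ] X)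
    (b : ↥(LinearMap.range i.toLinearMap)) :
    i ((rangeEquiv A i).symm b) = (b : X) := by
  rw [← rangeEquiv_coe A i ((rangeEquiv A i).symm b), LinearIsometryEquiv.apply_symm_apply]

/-- The inverse isometric embedding, from the range of `i` back into `X`, with range `A`. -/
noncomputable def invEmbed (A : Submodule ℝ X) (i : ↥A →ₗᵢ[ℝ] X) :
    ↥(LinearMap.range i.toLinearMap) →ₗᵢ[ℝ] X :=
  A.subtypeₗᵢ.comp (rangeEquiv A i).symm.toLinearIsometry

lemma invEmbed_apply (A : Submodule ℝ X) (i : ↥A →ₗᵢ[ℝ] X)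
    (b : ↥(LinearMap.range i.toLinearMap)) :
    invEmbed A i b = ((rangeEquiv A i).symm b : X) := rfl

lemma range_invEmbed (A : Submodule ℝ X) (i : ↥A →ₗᵢ[ℝ] X) :
    LinearMap.range (invEmbed A i).toLinearMap = A := by
  ext x
  constructor
  · rintro ⟨b, rfl⟩
    exact ((rangeEquiv A i).symm b).2
  · intro hx
    refine ⟨(rangeEquiv A i) ⟨x, hx⟩, ?_⟩
    show invEmbed A i _ = x
    rw [invEmbed_apply, LinearIsometryEquiv.symm_apply_apply]

end Aux

section Key

variable {X : Type*} [NormedAddCommGroup X] [NormedSpace ℝ X]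

lemma key
    (hhom : ∀ (A B : Submodule ℝ X) (hAB : A ≤ B), FiniteDimensional ℝ B →
      ∀ ε : ℝ, 0 < ε → ∀ i : ↥A →ₗᵢ[ℝ] X,
        ∃ (j : ↥B →L[ℝ] X) (c d : ℝ),
          (∀ a : ↥A, j ⟨a.1, hAB a.2⟩ = i a) ∧
          c * d ≤ 1 + ε ∧
          (∀ b : ↥B, ‖j b‖ ≤ c * ‖b‖) ∧ (∀ b : ↥B, ‖b‖ ≤ d * ‖j b‖))
    (A : Submodule ℝ X) (hA : FiniteDimensional ℝ A) (i : ↥A →ₗᵢ[ℝ] X) :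
    relProjConst (LinearMap.range i.toLinearMap) ≤ relProjConst A := by
  classical
  haveI := hA
  set A' := LinearMap.range i.toLinearMap with hA'def
  haveI : FiniteDimensional ℝ A' := inferInstance
  set S := {c | ∃ P : X →L[ℝ] X, (∀ x, P x ∈ A) ∧ (∀ y ∈ A, P y = y) ∧ c = ‖P‖} with hSdef
  have hSne : S.Nonempty := by
    obtain ⟨f, hf⟩ := Submodule.ClosedComplemented.of_finiteDimensional A
    refine ⟨‖A.subtypeL.comp f‖, A.subtypeL.comp f, fun x => (f x).2, ?_, rfl⟩
    intro y hy
    show ((f y : ↥A) : X) = y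
    rw [show f y = f ((⟨y, hy⟩ : ↥A) : X) from rfl, hf ⟨y, hy⟩]
  apply le_of_forall_pos_le_add
  intro δ hδ
  set m := relProjConst A + δ / 2 with hmdef
  have hm0 : 0 < m := by
    have := relProjConst_nonneg A
    positivity
  obtain ⟨cv, hcvS, hcv⟩ : ∃ cv ∈ S, cv < m := by
    apply exists_lt_of_csInf_lt hSne
    show sInf S < m
    have : relProjConst A = sInf S := rfl
    rw [← this, hmdef]
    linarith
  obtain ⟨P, hP1, hP2, rfl⟩ := hcvS
  set ε := δ / (2 * m) with hεdef
  have hε : 0 < ε := by positivity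
  have main : relProjConst A' ≤ (1 + ε) * m := by
    apply glue A' ((1 + ε) * m) (by positivity)
    intro B hAB hB
    obtain ⟨j, c, d, hj, hcd, hc, hd⟩ := hhom A' B hAB hB ε hε (invEmbed A i)
    -- j restricted to A' equals invEmbed
    have hjA' : ∀ (b : ↥B) (hb : (b : X) ∈ A'), j b = invEmbed A i ⟨(b : X), hb⟩ := by
      intro b hb
      have := hj ⟨(b : X), hb⟩
      rwa [show (⟨(⟨(b : X), hb⟩ : ↥A').1, hAB hb⟩ : ↥B) = b from Subtype.ext rfl] at this
    refine ⟨i.toContinuousLinearMap.comp ((P.comp j).codRestrict A (fun b => hP1 _)), ?_, ?_, ?_⟩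
    · intro b
      exact ⟨_, rfl⟩
    · intro b hb
      show i ((P.comp j).codRestrict A (fun b => hP1 _) b) = (b : X)
      have hjb : j b = ((rangeEquiv A i).symm ⟨(b : X), hb⟩ : X) := by
        rw [hjA' b hb, invEmbed_apply]
      have hPjb : P (j b) = j b := by
        rw [hjb]
        exact hP2 _ ((rangeEquiv A i).symm ⟨(b : X), hb⟩).2
      have : ((P.comp j).codRestrict A (fun b => hP1 _) b) =
          (rangeEquiv A i).symm ⟨(b : X), hb⟩ := by
        apply Subtype.ext
        show P (j b) = _
        rw [hPjb, hjb]
      rw [this, rangeEquiv_symm_coe]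
    · intro b
      rcases eq_or_ne b 0 with rfl | hb0
      · simp
      · have hbpos : (0 : ℝ) < ‖b‖ := norm_pos_iff.mpr hb0
        have hdj := hd b
        have hjpos : (0 : ℝ) < ‖j b‖ := by
          by_contra hcon
          push_neg at hcon
          have : ‖j b‖ = 0 := le_antisymm hcon (norm_nonneg _)
          rw [this, mul_zero] at hdj
          linarith
        have hdpos : (0 : ℝ) < d := by
          nlinarith
        have hcpos : (0 : ℝ) < c := by
          have := hc b
          nlinarith
        set y : X := i ((P.comp j).codRestrict A (fun b => hP1 _) b) with hydef
        have hyA' : y ∈ A' := ⟨_, rfl⟩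
        have hyB : y ∈ B := hAB hyA'
        have hjy : j ⟨y, hyB⟩ = P (j b) := by
          have h1 : j ⟨y, hyB⟩ = invEmbed A i ⟨y, hyA'⟩ := hjA' ⟨y, hyB⟩ hyA'
          have h2 : (⟨y, hyA'⟩ : ↥A') = (rangeEquiv A i) ((P.comp j).codRestrict A (fun b => hP1 _) b) := by
            apply Subtype.ext
            rw [rangeEquiv_coe]
          rw [h1, invEmbed_apply, h2, LinearIsometryEquiv.symm_apply_apply]
          rfl
        have goal1 : ‖i.toContinuousLinearMap.comp ((P.comp j).codRestrict A (fun b => hP1 _)) b‖ = ‖(⟨y, hyB⟩ : ↥B)‖ := rfl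
        rw [goal1]
        calc ‖(⟨y, hyB⟩ : ↥B)‖ ≤ d * ‖j ⟨y, hyB⟩‖ := hd _
          _ = d * ‖P (j b)‖ := by rw [hjy]
          _ ≤ d * (‖P‖ * ‖j b‖) :=
            mul_le_mul_of_nonneg_left (P.le_opNorm _) hdpos.le
          _ ≤ d * (m * (c * ‖b‖)) := by
            apply mul_le_mul_of_nonneg_left _ hdpos.le
            exact mul_le_mul hcv.le (hc b) (norm_nonneg _) hm0.le
          _ = (c * d) * (m * ‖b‖) := by ring
          _ ≤ (1 + ε) * (m * ‖b‖) :=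
            mul_le_mul_of_nonneg_right hcd (by positivity)
          _ = (1 + ε) * m * ‖b‖ := by ring
  have hεm : ε * m = δ / 2 := by
    rw [hεdef]
    field_simp
  have harith : (1 + ε) * m = relProjConst A + δ := by
    calc (1 + ε) * m = m + ε * m := by ring
      _ = relProjConst A + δ := by rw [hεm, hmdef]; ring
  rw [harith] at main
  exact main

end Key

theorem stmt_17 {X : Type*} [NormedAddCommGroup X] [NormedSpace ℝ X] [CompleteSpace X]
    [TopologicalSpace.SeparableSpace X]
    (hhom : ∀ (A B : Submodule ℝ X) (hAB : A ≤ B), FiniteDimensional ℝ B →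
      ∀ ε : ℝ, 0 < ε → ∀ i : ↥A →ₗᵢ[ℝ] X,
        ∃ (j : ↥B →L[ℝ] X) (c d : ℝ),
          (∀ a : ↥A, j ⟨a.1, hAB a.2⟩ = i a) ∧
          c * d ≤ 1 + ε ∧
          (∀ b : ↥B, ‖j b‖ ≤ c * ‖b‖) ∧ (∀ b : ↥B, ‖b‖ ≤ d * ‖j b‖)) :
    ∀ (A : Submodule ℝ X), FiniteDimensional ℝ A → ∀ i : ↥A →ₗᵢ[ℝ] X,
      relProjConst A = relProjConst (LinearMap.range i.toLinearMap) := by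
  intro A hA i
  haveI := hA
  have h1 := key hhom A hA i
  haveI : FiniteDimensional ℝ (LinearMap.range i.toLinearMap) := inferInstance
  have h2 := key hhom (LinearMap.range i.toLinearMap) inferInstance (invEmbed A i)
  rw [range_invEmbed] at h2
  exact le_antisymm h2 h1
end
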